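/- (Horizon monotonicity of feasible sets.) Let i ∈ ℕ, let v = (v(0),…,v(i−1)) be a disturbance sequence of length i, and let d ∈ ℝ^n. Assume X_f ⊆ 𝕏 and that X_f is control invariant for the disturbance d, i.e., for every y ∈ X_f there exists u ∈ 𝕌 with A y + B u + d ∈ X_f. Then 𝒳_i(v) ⊆ 𝒳_{i+1}(v⌢d), where v⌢d = (v(0),…,v(i−1),d) is v with d appended: every state feasible for the i-step problem with disturbances v is feasible for the (i+1)-step problem with disturbances v⌢d. -/
import Mathlib


open Matrix

/-- A control sequence `u` is admissible for `(x, w)` over horizon `k`: there is a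
state trajectory `φ` with `φ 0 = x`, obeying the perturbed dynamics
`φ(j+1) = A φ(j) + B u(j) + w(j)`, state and input constraints for `j < k`, and
the terminal constraint `φ k ∈ Xf`. -/
def AdmissibleSeq (n m k : ℕ) (A : Matrix (Fin n) (Fin n) ℝ)
    (B : Matrix (Fin n) (Fin m) ℝ) (𝕏 : Set (Fin n → ℝ)) (𝕌 : Set (Fin m → ℝ))
    (Xf : Set (Fin n → ℝ)) (x : Fin n → ℝ) (w : ℕ → (Fin n → ℝ))
    (u : ℕ → (Fin m → ℝ)) : Prop :=
  ∃ φ : ℕ → (Fin n → ℝ), φ 0 = x ∧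
    (∀ j < k, φ (j + 1) = A.mulVec (φ j) + B.mulVec (u j) + w j) ∧
    (∀ j < k, φ j ∈ 𝕏) ∧ (∀ j < k, u j ∈ 𝕌) ∧ φ k ∈ Xf

/-- The `k`-step feasible set `𝒳_k(w)`. -/
def FeasSet (n m k : ℕ) (A : Matrix (Fin n) (Fin n) ℝ)
    (B : Matrix (Fin n) (Fin m) ℝ) (𝕏 : Set (Fin n → ℝ)) (𝕌 : Set (Fin m → ℝ))
    (Xf : Set (Fin n → ℝ)) (w : ℕ → (Fin n → ℝ)) : Set (Fin n → ℝ) :=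
  {x | x ∈ 𝕏 ∧ ∃ u : ℕ → (Fin m → ℝ), AdmissibleSeq n m k A B 𝕏 𝕌 Xf x w u}

/-- **Horizon monotonicity of feasible sets.** If `Xf ⊆ 𝕏` and `Xf` is control
invariant for the disturbance `d`, then `𝒳_i(v) ⊆ 𝒳_{i+1}(v⌢d)`, where `v⌢d` is
the length-`i` disturbance sequence `v` with `d` appended. -/
theorem feasible_set_horizon_monotone
    (n m i : ℕ)
    (A : Matrix (Fin n) (Fin n) ℝ) (B : Matrix (Fin n) (Fin m) ℝ)
    (𝕏 : Set (Fin n → ℝ)) (𝕌 : Set (Fin m → ℝ)) (Xf : Set (Fin n → ℝ))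
    (v : ℕ → (Fin n → ℝ)) (d : Fin n → ℝ)
    (hXf𝕏 : Xf ⊆ 𝕏)
    (hci : ∀ y ∈ Xf, ∃ u ∈ 𝕌, A.mulVec y + B.mulVec u + d ∈ Xf) :
    FeasSet n m i A B 𝕏 𝕌 Xf v ⊆
      FeasSet n m (i + 1) A B 𝕏 𝕌 Xf (fun j => if j < i then v j else d) := by
  intro x hx
  obtain ⟨hx𝕏, u, φ, hφ0, hdyn, hst, hin, hterm⟩ := hx
  obtain ⟨u', hu'𝕌, hu'Xf⟩ := hci (φ i) hterm
  refine ⟨hx𝕏, (fun j => if j < i then u j else u'),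
    (fun j => if j ≤ i then φ j else A.mulVec (φ i) + B.mulVec u' + d),
    by simp [hφ0], ?_, ?_, ?_, ?_⟩
  · intro j hj
    rcases lt_or_ge j i with h | h
    · simp only [if_pos h, if_pos h.le, if_pos (Nat.succ_le_of_lt h)]
      exact hdyn j h
    · have hji : j = i := le_antisymm (Nat.lt_succ_iff.mp hj) h
      subst hji
      simp
  · intro j hj
    rcases lt_or_ge j i with h | h
    · simpa [h.le] using hst j h
    · have hji : j = i := le_antisymm (Nat.lt_succ_iff.mp hj) h
      subst hji
      simpa using hXf𝕏 hterm
  · intro j hj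
    rcases lt_or_ge j i with h | h
    · simpa [h] using hin j h
    · simpa [Nat.not_lt.mpr h] using hu'𝕌
  · simpa using hu'Xf
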